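/- arXiv:1503.07717 — 3 statements merged into one kernel-verified Lean document; each statement's English description precedes it below -/
import Mathlib

section
/- Answer sets of a normal propositional program are incomparable: if X and Y are both answer sets of P and X ⊆ Y, then X = Y. -/
structure Rule (α : Type) where
  head : α
  pos : Set α
  neg : Set α

variable {α : Type}

def TP (P : Set (Rule α)) (X : Set α) : Set α :=
  {a | ∃ r ∈ P, r.head = a ∧ r.pos ⊆ X}

def Cn (P : Set (Rule α)) : Set α :=
  ⋂₀ {X | TP P X ⊆ X}

def reduct (P : Set (Rule α)) (X : Set α) : Set (Rule α) :=
  {r' | ∃ r ∈ P, r.neg ∩ X = ∅ ∧ r' = ⟨r.head, r.pos, ∅⟩}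

def AnswerSet (P : Set (Rule α)) (X : Set α) : Prop :=
  X = Cn (reduct P X)

def GR (P : Set (Rule α)) (X : Set α) : Set (Rule α) :=
  {r ∈ P | r.pos ⊆ X ∧ r.neg ∩ X = ∅}

def heads (R : Set (Rule α)) : Set α := Rule.head '' R

def negs (R : Set (Rule α)) : Set α := ⋃ r ∈ R, r.neg

def prefixSet (l : List (Rule α)) (i : ℕ) : Set (Rule α) :=
  {r | ∃ j < i, l[j]? = some r}

def Grounded (R : Set (Rule α)) : Prop :=
  ∃ l : List (Rule α), l.Nodup ∧ (∀ r, r ∈ R ↔ r ∈ l) ∧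
    ∀ i (hi : i < l.length), (l.get ⟨i, hi⟩).pos ⊆ heads (prefixSet l i)

theorem TP_mono_left {Q R : Set (Rule α)} (h : Q ⊆ R) (X : Set α) : TP Q X ⊆ TP R X :=
  fun _ ⟨r, hr, hrX⟩ => ⟨r, h hr, hrX⟩

theorem Cn_mono : Monotone (Cn : Set (Rule α) → Set α) := fun _ _ h =>
  Set.sInter_subset_sInter fun _ hZ => (TP_mono_left h _).trans hZ

theorem reduct_antitone (P : Set (Rule α)) : Antitone (reduct P) := by
  rintro X Y hXY _ ⟨r, hr, hneg, rfl⟩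
  exact ⟨r, hr, Set.subset_empty_iff.mp (hneg ▸ Set.inter_subset_inter_right _ hXY), rfl⟩

theorem answerSets_incomparable (α : Type) (P : Set (Rule α)) (X Y : Set α)
    (hX : AnswerSet P X) (hY : AnswerSet P Y) (hXY : X ⊆ Y) : X = Y := by
  refine hXY.antisymm ?_
  calc Y = Cn (reduct P Y) := hY
    _ ⊆ Cn (reduct P X) := Cn_mono (reduct_antitone P hXY)
    _ = X := hX.symm
end

section
/- Let P be a normal propositional program and X an atom set. If the set of generating rules GR_P(X) is grounded, then Cn(GR_P(X)^∅) = head(GR_P(X)). -/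
variable {α : Type}

/-! Deleting negative bodies does not change `TP`, and every derived atom is a head, so
`Cn (R^∅) = Cn R ⊆ heads R` for any `R`. Conversely, along a grounding enumeration each rule's
positive body consists of earlier heads, so by strong induction every head is derivable. -/

theorem TP_mono {Q : Set (Rule α)} {Y Z : Set α} (h : Y ⊆ Z) : TP Q Y ⊆ TP Q Z :=
  fun _ ⟨r, hr, hhead, hpos⟩ => ⟨r, hr, hhead, hpos.trans h⟩

theorem Cn_subset_of_TP_subset {Q : Set (Rule α)} {Y : Set α} (h : TP Q Y ⊆ Y) : Cn Q ⊆ Y :=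
  Set.sInter_subset_of_mem h

theorem TP_Cn_subset (Q : Set (Rule α)) : TP Q (Cn Q) ⊆ Cn Q :=
  fun _ ha _ hY => hY (TP_mono (Cn_subset_of_TP_subset hY) ha)

theorem head_mem_Cn {Q : Set (Rule α)} {r : Rule α} (hr : r ∈ Q) (hpos : r.pos ⊆ Cn Q) :
    r.head ∈ Cn Q :=
  TP_Cn_subset Q ⟨r, hr, rfl, hpos⟩

theorem TP_subset_heads (Q : Set (Rule α)) (Y : Set α) : TP Q Y ⊆ heads Q :=
  fun _ ⟨r, hr, hhead, _⟩ => ⟨r, hr, hhead⟩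

theorem Cn_subset_heads (Q : Set (Rule α)) : Cn Q ⊆ heads Q :=
  Cn_subset_of_TP_subset (TP_subset_heads Q _)

theorem TP_reduct_empty (R : Set (Rule α)) (Y : Set α) : TP (reduct R ∅) Y = TP R Y := by
  ext a
  constructor
  · rintro ⟨_, ⟨r, hr, -, rfl⟩, hhead, hpos⟩
    exact ⟨r, hr, hhead, hpos⟩
  · rintro ⟨r, hr, hhead, hpos⟩
    exact ⟨⟨r.head, r.pos, ∅⟩, ⟨r, hr, Set.inter_empty _, rfl⟩, hhead, hpos⟩

theorem Cn_reduct_empty (R : Set (Rule α)) : Cn (reduct R ∅) = Cn R := by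
  simp only [Cn, TP_reduct_empty]

theorem mem_prefixSet {l : List (Rule α)} {i : ℕ} {r : Rule α} :
    r ∈ prefixSet l i ↔ ∃ (j : ℕ) (hj : j < l.length), j < i ∧ l[j] = r := by
  simp only [prefixSet, Set.mem_ofPred_eq, List.getElem?_eq_some_iff]
  grind

theorem Grounded.heads_subset_Cn {R : Set (Rule α)} (hR : Grounded R) : heads R ⊆ Cn R := by
  obtain ⟨l, -, hmem, hpos⟩ := hR
  have head_mem : ∀ i (hi : i < l.length), l[i].head ∈ Cn R := by
    intro i
    induction i using Nat.strong_induction_on with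
    | _ i IH =>
      intro hi
      refine head_mem_Cn ((hmem _).mpr (List.getElem_mem hi)) fun x hx => ?_
      obtain ⟨s, hs, rfl⟩ := hpos i hi hx
      obtain ⟨j, hj, hji, rfl⟩ := mem_prefixSet.mp hs
      exact IH j hji hj
  rintro _ ⟨r, hr, rfl⟩
  obtain ⟨i, hi, rfl⟩ := List.getElem_of_mem ((hmem r).mp hr)
  exact head_mem i hi

theorem grounded_Cn_eq_heads (α : Type) (P : Set (Rule α)) (X : Set α)
    (hg : Grounded (GR P X)) :
    Cn (reduct (GR P X) ∅) = heads (GR P X) := by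
  rw [Cn_reduct_empty]
  exact (Cn_subset_heads _).antisymm hg.heads_subset_Cn
end

section
/- Let P be a normal propositional program and ⟨R_i, ⟨IN_i, OUT_i⟩⟩ an ASPeRiX computation for P converging at some step n (i.e., Δ_cho at step n is empty). Then for every i ≥ 1 and every j ≥ i−1, the rule r_i added at step i belongs to GR_P(IN_j). -/
variable {α : Type}

def Dpro (P R : Set (Rule α)) (IN OUT : Set α) : Set (Rule α) :=
  {r ∈ P | r ∉ R ∧ r.pos ⊆ IN ∧ r.neg ⊆ OUT}

def Dcho (P R : Set (Rule α)) (IN : Set α) : Set (Rule α) :=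
  {r ∈ P | r ∉ R ∧ r.pos ⊆ IN ∧ r.neg ∩ IN = ∅}

structure AspComp {α : Type} (P : Set (Rule α)) (bot : α) where
  R : ℕ → Set (Rule α)
  IN : ℕ → Set α
  OUT : ℕ → Set α
  init_R : R 0 = ∅
  init_IN : IN 0 = ∅
  init_OUT : OUT 0 = {bot}
  disj : ∀ i, IN i ∩ OUT i = ∅
  revision : ∀ i, 1 ≤ i →
    (∃ r ∈ Dpro P (R (i-1)) (IN (i-1)) (OUT (i-1)),
        R i = R (i-1) ∪ {r} ∧ IN i = IN (i-1) ∪ {r.head} ∧ OUT i = OUT (i-1)) ∨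
    (Dpro P (R (i-1)) (IN (i-1)) (OUT (i-1)) = ∅ ∧
      ∃ r ∈ Dcho P (R (i-1)) (IN (i-1)),
        R i = R (i-1) ∪ {r} ∧ IN i = IN (i-1) ∪ {r.head} ∧
        OUT i = OUT (i-1) ∪ r.neg) ∨
    (R i = R (i-1) ∧ IN i = IN (i-1) ∧ OUT i = OUT (i-1))
  convergence : ∃ i, Dcho P (R i) (IN i) = ∅

/-! A rule added at step `i` is applicable to `IN (i-1)` and has its negative body in
`OUT i`: for a propagation because it was already in `OUT (i-1)`, for a choice because
the choice puts it there. Since `IN` and `OUT` only grow and stay disjoint, the negative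
body then keeps missing every later `IN j`. -/

lemma mem_GR_of_neg_subset {P : Set (Rule α)} {X Y : Set α} {r : Rule α}
    (hXY : X ∩ Y = ∅) (hP : r ∈ P) (hpos : r.pos ⊆ X) (hneg : r.neg ⊆ Y) :
    r ∈ GR P X :=
  ⟨hP, hpos, Set.eq_empty_of_subset_empty fun a ha =>
    hXY ▸ (⟨ha.2, hneg ha.1⟩ : a ∈ X ∩ Y)⟩

namespace AspComp

variable {P : Set (Rule α)} {bot : α} (C : AspComp P bot)

lemma IN_subset_succ_and_OUT_subset_succ (k : ℕ) :
    C.IN k ⊆ C.IN (k + 1) ∧ C.OUT k ⊆ C.OUT (k + 1) := by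
  rcases C.revision (k + 1) k.succ_pos with
      ⟨r, -, -, hIN, hOUT⟩ | ⟨-, r, -, -, hIN, hOUT⟩ | ⟨-, hIN, hOUT⟩ <;>
    simp [hIN, hOUT]

lemma monotone_IN : Monotone C.IN :=
  monotone_nat_of_le_succ fun k => (C.IN_subset_succ_and_OUT_subset_succ k).1

lemma monotone_OUT : Monotone C.OUT :=
  monotone_nat_of_le_succ fun k => (C.IN_subset_succ_and_OUT_subset_succ k).2

lemma added_rule_mem_GR_and_neg_subset_OUT {i : ℕ} (hi : 1 ≤ i) {r : Rule α}
    (hr : r ∈ C.R i) (hr' : r ∉ C.R (i - 1)) :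
    r ∈ GR P (C.IN (i - 1)) ∧ r.neg ⊆ C.OUT i := by
  rcases C.revision i hi with
      ⟨r', ⟨hP, -, hpos, hneg⟩, hR, -, hOUT⟩ |
      ⟨-, r', ⟨hP, -, hpos, hneg⟩, hR, -, hOUT⟩ | ⟨hR, -, -⟩
  · obtain rfl : r = r' := ((hR ▸ hr).resolve_left hr')
    exact ⟨mem_GR_of_neg_subset (C.disj (i - 1)) hP hpos hneg, hOUT ▸ hneg⟩
  · obtain rfl : r = r' := ((hR ▸ hr).resolve_left hr')
    exact ⟨⟨hP, hpos, hneg⟩, hOUT ▸ Set.subset_union_right⟩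
  · exact absurd (hR ▸ hr) hr'

end AspComp

theorem added_rule_generating_general (α : Type) (P : Set (Rule α)) (bot : α)
    (C : AspComp P bot) :
    ∀ i, 1 ≤ i → ∀ r, r ∈ C.R i → r ∉ C.R (i-1) →
      ∀ j, i - 1 ≤ j → r ∈ GR P (C.IN j) := by
  intro i hi r hr hr' j hj
  obtain ⟨hGR, hneg⟩ := C.added_rule_mem_GR_and_neg_subset_OUT hi hr hr'
  rcases hj.eq_or_lt with rfl | hij
  · exact hGR
  · exact mem_GR_of_neg_subset (C.disj j) hGR.1 (hGR.2.1.trans (C.monotone_IN hj))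
      (hneg.trans (C.monotone_OUT (by omega)))

theorem added_rule_generating (α : Type) (P : Set (Rule α)) (bot : α)
    (C : AspComp P bot) (n : ℕ) (hn : Dcho P (C.R n) (C.IN n) = ∅) :
    ∀ i, 1 ≤ i → ∀ r, r ∈ C.R i → r ∉ C.R (i-1) →
      ∀ j, i - 1 ≤ j → r ∈ GR P (C.IN j) :=
  added_rule_generating_general α P bot C
end
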